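/- arXiv:1911.07213 — 3 statements merged into one kernel-verified Lean document; each statement's English description precedes it below -/
import Mathlib

section
/- (Lemma 1, Grone et al.) Let G = (V,E) be a chordal undirected simple graph on V = {1,…,n} and let C_1,…,C_N be the set of all cliques of G. Then for every X ∈ S^n(E), there exists Y ∈ S^n_{⪰0} with Π_E(Y) = X if and only if the principal submatrix X_{C_i} = P_{C_i} X P_{C_i}ᵀ is positive semidefinite for every i ∈ {1,…,N}. -/
open Matrix

/-- `X` has the sparsity pattern of the graph `G`: every off-diagonal entry
indexed by a non-edge vanishes. -/
def HasSparsity {n : ℕ} (G : SimpleGraph (Fin n)) (X : Matrix (Fin n) (Fin n) ℝ) : Prop :=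
  ∀ i j : Fin n, i ≠ j → ¬ G.Adj i j → X i j = 0

/-- The projection `Π_E` onto the space of matrices with sparsity pattern `G`:
entries outside `Ē = E ∪ {(i,i)}` are set to zero. -/
def sparsityProj {n : ℕ} (G : SimpleGraph (Fin n)) [DecidableRel G.Adj]
    (X : Matrix (Fin n) (Fin n) ℝ) : Matrix (Fin n) (Fin n) ℝ :=
  Matrix.of fun i j => if i = j ∨ G.Adj i j then X i j else 0

/-- The `|C| × n` entry-selection matrix `P_C`: `[P_C]_{h,k} = 1` iff `k` is the
`h`-th smallest element of `C`. -/
def selMat {n : ℕ} (C : Finset (Fin n)) : Matrix (Fin C.card) (Fin n) ℝ :=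
  Matrix.of fun h k => if ((C.orderIsoOfFin rfl h : C) : Fin n) = k then 1 else 0

/-- A clique of `G`: a maximal complete set of vertices. -/
def IsMaxClique {n : ℕ} (G : SimpleGraph (Fin n)) (s : Finset (Fin n)) : Prop :=
  G.IsClique (↑s : Set (Fin n)) ∧
    ∀ t : Finset (Fin n), G.IsClique (↑t : Set (Fin n)) → s ⊆ t → s = t

/-- `G` is chordal: every cycle of length greater than three has a chord, i.e. an
edge of `G` joining two vertices of the cycle that is not an edge of the cycle
(equivalently, joining two nonconsecutive vertices of the cycle). -/
def IsChordal {n : ℕ} (G : SimpleGraph (Fin n)) : Prop :=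
  ∀ (v : Fin n) (c : G.Walk v v), c.IsCycle → 3 < c.length →
    ∃ u w : Fin n, u ∈ c.support ∧ w ∈ c.support ∧ G.Adj u w ∧ s(u, w) ∉ c.edges

/-!
A chordal graph has a simplicial vertex (Dirac). In a vertex set `U` that is not a clique pick
non-adjacent `a` and `b`; the neighbours of `a` adjacent to the component of `b` in `U` minus the
closed neighbourhood of `a` form a clique, since two non-adjacent ones, `a`, and a shortest path
through the component would make a chordless cycle. Induction on this component together with its
attachment gives a simplicial vertex of `U` not adjacent to `a`.

A completion on `U` is built from one, `M`, on `U \ {v}` for a simplicial `v` with neighbours `K`: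
positive semidefiniteness of `X` on the clique `K ∪ {v}` puts the column `X_{Kv}` in the range of
`X_K`, say `X_K u = X_{Kv}`, and then `uᵀ X_K u ≤ X_{vv}`. With `L` the identity whose column `v`
is replaced by `u`, the matrix `Lᵀ M L + (X_{vv} - uᵀ M u) E_{vv}` is PSD and agrees with `X` on
the pattern of `G` in `U`. Conversely, principal submatrices of a PSD matrix are PSD.
-/

namespace SimpleGraph

variable {V : Type*} {G : SimpleGraph V}

namespace Walk

variable {u v x y : V}

lemma mk_mem_edges_of_length_eq_one {p : G.Walk u v} (h : p.length = 1) : s(u, v) ∈ p.edges := by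
  cases p with
  | nil => simp at h
  | cons _ q => cases q with
    | nil => simp
    | cons => simp at h

lemma IsPath.cons_concat_isCycle {s t a : V} {p : G.Walk s t} (hp : p.IsPath) (ha : a ∉ p.support)
    (hst : s ≠ t) (has : G.Adj a s) (hta : G.Adj t a) : (cons has (p.concat hta)).IsCycle := by
  refine (cons_isCycle_iff _ _).mpr ⟨hp.concat ha _, fun h => ?_⟩
  rw [edges_concat, List.concat_eq_append, List.mem_append, List.mem_singleton] at h
  rcases h with h | h
  · exact ha (fst_mem_support_of_mem_edges _ h)
  · simp only [Sym2.eq, Sym2.rel_iff', Prod.mk.injEq, Prod.swap_prod_mk] at h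
    rcases h with h | h
    exacts [hta.ne h.1.symm, hst h.2]

variable [DecidableEq V]

lemma exists_length_lt_of_adj_of_mem_dropUntil (p : G.Walk u v) (hx : x ∈ p.support)
    (hy : y ∈ (p.dropUntil x hx).support) (hxy : G.Adj x y) (he : s(x, y) ∉ p.edges) :
    ∃ q : G.Walk u v, q.support ⊆ p.support ∧ q.length < p.length := by
  refine ⟨(p.takeUntil x hx).append (cons hxy ((p.dropUntil x hx).dropUntil y hy)), ?_, ?_⟩
  · intro z hz
    rw [mem_support_append_iff, support_cons, List.mem_cons] at hz
    rcases hz with hz | rfl | hz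
    · exact support_takeUntil_subset_support _ _ hz
    · exact hx
    · exact support_dropUntil_subset_support _ _ (support_dropUntil_subset_support _ _ hz)
  · have hp := congrArg length (p.take_spec hx)
    have hd := congrArg length ((p.dropUntil x hx).take_spec hy)
    have h0 : ((p.dropUntil x hx).takeUntil y hy).length ≠ 0 :=
      fun h => hxy.ne (eq_of_length_eq_zero h)
    have h1 : ((p.dropUntil x hx).takeUntil y hy).length ≠ 1 := fun h => he <|
      edges_dropUntil_subset_edges _ _ (edges_takeUntil_subset_edges _ _
        (mk_mem_edges_of_length_eq_one h))
    simp only [length_append, length_cons] at hp hd ⊢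
    omega

lemma exists_length_lt_of_adj (p : G.Walk u v) (hx : x ∈ p.support) (hy : y ∈ p.support)
    (hxy : G.Adj x y) (he : s(x, y) ∉ p.edges) :
    ∃ q : G.Walk u v, q.support ⊆ p.support ∧ q.length < p.length := by
  have hy' : y ∈ ((p.takeUntil x hx).append (p.dropUntil x hx)).support := by
    rwa [take_spec]
  rcases (mem_support_append_iff _ _).mp hy' with hy' | hy'
  · obtain ⟨q, hq, hlt⟩ := (p.takeUntil x hx).exists_length_lt_of_adj_of_mem_dropUntil hy'
      (end_mem_support _) hxy.symm
      (fun h => he (Sym2.eq_swap ▸ edges_takeUntil_subset_edges _ _ h))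
    refine ⟨q.append (p.dropUntil x hx), ?_, ?_⟩
    · intro z hz
      rcases (mem_support_append_iff _ _).mp hz with hz | hz
      · exact support_takeUntil_subset_support _ _ (hq hz)
      · exact support_dropUntil_subset_support _ _ hz
    · have hp := congrArg length (p.take_spec hx)
      simp only [length_append] at hp ⊢
      omega
  · exact p.exists_length_lt_of_adj_of_mem_dropUntil hx hy' hxy he

end Walk

def Chordal (G : SimpleGraph V) : Prop :=
  ∀ (v : V) (c : G.Walk v v), c.IsCycle → 3 < c.length →
    ∃ u w : V, u ∈ c.support ∧ w ∈ c.support ∧ G.Adj u w ∧ s(u, w) ∉ c.edges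

open Walk in
theorem Chordal.adj_of_walk_outside_neighborhood (hG : G.Chordal) {a s t : V} (hst : s ≠ t)
    (has : G.Adj a s) (hat : G.Adj a t) (p : G.Walk s t)
    (hp : ∀ z ∈ p.support, z = s ∨ z = t ∨ z ≠ a ∧ ¬ G.Adj a z) : G.Adj s t := by
  classical
  -- otherwise a shortest such walk, closed up through `a`, is a chordless cycle of length `≥ 4`
  by_contra hnst
  obtain ⟨p₀, hp₀, hmin⟩ := (measure fun q : G.Walk s t => q.length).wf.has_min
    {q | ∀ z ∈ q.support, z = s ∨ z = t ∨ z ≠ a ∧ ¬ G.Adj a z} ⟨p, hp⟩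
  set q := p₀.bypass
  have hq : ∀ z ∈ q.support, z = s ∨ z = t ∨ z ≠ a ∧ ¬ G.Adj a z :=
    fun z hz => hp₀ z (support_bypass_subset_support _ hz)
  have hchordless : ∀ x ∈ q.support, ∀ y ∈ q.support, G.Adj x y → s(x, y) ∈ q.edges := by
    intro x hx y hy hxy
    by_contra he
    obtain ⟨r, hr, hlt⟩ := q.exists_length_lt_of_adj hx hy hxy he
    exact hmin r (fun z hz => hq z (hr hz)) (hlt.trans_le (length_bypass_le_length _))
  have haq : a ∉ q.support := fun ha => by
    rcases hq a ha with h | h | h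
    exacts [has.ne h, hat.ne h, h.1 rfl]
  have hlen : 2 ≤ q.length := by
    have h0 : q.length ≠ 0 := fun h => hst (eq_of_length_eq_zero h)
    have h1 : q.length ≠ 1 := fun h => hnst (adj_of_length_eq_one h)
    omega
  set c := cons has (q.concat hat.symm)
  have hc : c.IsCycle := (bypass_isPath _).cons_concat_isCycle haq hst has hat.symm
  have hnbr : ∀ y ∈ q.support, G.Adj a y → s(a, y) ∈ c.edges := by
    intro y hy hay
    rcases hq y hy with rfl | rfl | h
    · simp [c]
    · simp [c, Sym2.eq_swap]
    · exact absurd hay h.2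
  have hclen : 3 < c.length := by
    simp only [c, length_cons, length_concat]
    omega
  obtain ⟨x, y, hx, hy, hxy, hxyc⟩ := hG a c hc hclen
  have hsupp : ∀ z ∈ c.support, z = a ∨ z ∈ q.support := by
    intro z hz
    simp only [c, support_cons, support_concat, List.mem_cons, List.mem_append] at hz
    tauto
  have hqc : q.edges ⊆ c.edges := fun e he => by simp [c, he]
  rcases hsupp x hx with rfl | hxq <;> rcases hsupp y hy with rfl | hyq
  · exact hxy.ne rfl
  · exact hxyc (hnbr y hyq hxy)
  · exact hxyc (Sym2.eq_swap ▸ hnbr x hxq hxy.symm)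
  · exact hxyc (hqc (hchordless x hxq y hyq hxy))

def IsSimplicialIn (G : SimpleGraph V) (U : Set V) (v : V) : Prop :=
  G.IsClique (G.neighborSet v ∩ U)

section

variable [DecidableEq V]

open Finset Walk

/-- `C` is the component of `b` in `U` minus the closed neighbourhood of `a`, and `S` the set of
neighbours of `a` adjacent to `C`. -/
theorem Chordal.exists_component_with_isClique_attachment (hG : G.Chordal) {U : Finset V}
    {a b : V} (ha : a ∈ U) (hb : b ∈ U) (hab : a ≠ b) (hnab : ¬ G.Adj a b) :
    ∃ C S : Finset V, b ∈ C ∧ C ∪ S ⊂ U ∧ (∀ x ∈ C, x ≠ a ∧ ¬ G.Adj a x) ∧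
      (∀ x ∈ C, ∀ y ∈ U, G.Adj x y → y ∈ C ∪ S) ∧ G.IsClique (S : Set V) := by
  classical
  set O : Set V := {z | z ∈ U ∧ z ≠ a ∧ ¬ G.Adj a z}
  set C := U.filter fun x => ∃ p : G.Walk b x, ∀ z ∈ p.support, z ∈ O
  set S := U.filter fun s => G.Adj a s ∧ ∃ c ∈ C, G.Adj s c
  have hCO : ∀ x ∈ C, x ∈ O := fun x hx => by
    obtain ⟨-, p, hp⟩ := mem_filter.mp hx
    exact hp x (end_mem_support p)
  have hconn : ∀ x ∈ C, ∀ y ∈ C, ∃ p : G.Walk x y, ∀ z ∈ p.support, z ∈ O := by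
    intro x hx y hy
    obtain ⟨-, p, hp⟩ := mem_filter.mp hx
    obtain ⟨-, q, hq⟩ := mem_filter.mp hy
    refine ⟨p.reverse.append q, fun z hz => ?_⟩
    rw [mem_support_append_iff, support_reverse, List.mem_reverse] at hz
    exact hz.elim (hp z) (hq z)
  refine ⟨C, S, ?_, ?_, fun x hx => (hCO x hx).2, ?_, ?_⟩
  · exact mem_filter.mpr ⟨hb, nil, by simp [O, hb, hab.symm, hnab]⟩
  · refine (ssubset_iff_of_subset (union_subset (filter_subset _ _) (filter_subset _ _))).mpr
      ⟨a, ha, fun haCS => ?_⟩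
    rcases mem_union.mp haCS with h | h
    · exact (hCO a h).2.1 rfl
    · exact (mem_filter.mp h).2.1.ne rfl
  · intro x hx y hy hxy
    by_cases hay : G.Adj a y
    · exact mem_union_right _ (mem_filter.mpr ⟨hy, hay, x, hx, hxy.symm⟩)
    · have hya : y ≠ a := fun h => (hCO x hx).2.2 (h ▸ hxy.symm)
      obtain ⟨-, p, hp⟩ := mem_filter.mp hx
      refine mem_union_left _ (mem_filter.mpr ⟨hy, p.concat hxy, fun z hz => ?_⟩)
      rw [support_concat, List.mem_append, List.mem_singleton] at hz
      rcases hz with hz | rfl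
      exacts [hp z hz, ⟨hy, hya, hay⟩]
  · intro s hs t ht hst
    obtain ⟨-, has, c, hc, hsc⟩ := mem_filter.mp hs
    obtain ⟨-, hat, d, hd, htd⟩ := mem_filter.mp ht
    obtain ⟨p, hp⟩ := hconn c hc d hd
    refine hG.adj_of_walk_outside_neighborhood hst has hat (cons hsc (p.concat htd.symm))
      fun z hz => ?_
    rw [support_cons, support_concat, List.mem_cons, List.mem_append,
      List.mem_singleton] at hz
    rcases hz with rfl | hz | rfl
    exacts [.inl rfl, .inr (.inr (hp z hz).2), .inr (.inl rfl)]

/-- Dirac's lemma, for the subgraph induced on `U`. -/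
theorem Chordal.isClique_or_exists_isSimplicialIn (hG : G.Chordal) (U : Finset V) :
    G.IsClique (U : Set V) ∨ ∃ x ∈ U, ∃ y ∈ U, x ≠ y ∧ ¬ G.Adj x y ∧
      G.IsSimplicialIn U x ∧ G.IsSimplicialIn U y := by
  induction U using Finset.strongInduction with
  | H U ih =>
  by_cases hU : G.IsClique (U : Set V)
  · exact .inl hU
  have step : ∀ a ∈ U, ∀ b ∈ U, a ≠ b → ¬ G.Adj a b →
      ∃ x ∈ U, x ≠ a ∧ ¬ G.Adj a x ∧ G.IsSimplicialIn U x := by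
    intro a ha b hb hab hnab
    obtain ⟨C, S, hbC, hCSU, hCa, hCnbr, hS⟩ :=
      hG.exists_component_with_isClique_attachment ha hb hab hnab
    -- of two non-adjacent vertices, one lies outside the clique `S`
    obtain ⟨x, hxC, hx⟩ : ∃ x ∈ C, G.IsSimplicialIn ↑(C ∪ S) x := by
      rcases ih _ hCSU with hcl | ⟨x, hx, y, hy, hxy, hnxy, hsx, hsy⟩
      · exact ⟨b, hbC, hcl.subset Set.inter_subset_right⟩
      · rw [mem_union] at hx hy
        by_cases hxC : x ∈ C
        · exact ⟨x, hxC, hsx⟩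
        by_cases hyC : y ∈ C
        · exact ⟨y, hyC, hsy⟩
        exact absurd (hS (hx.resolve_left hxC) (hy.resolve_left hyC) hxy) hnxy
    refine ⟨x, hCSU.subset (mem_union_left _ hxC), (hCa x hxC).1, (hCa x hxC).2,
      hx.subset ?_⟩
    rintro y ⟨hxy, hyU⟩
    exact ⟨hxy, hCnbr x hxC y hyU hxy⟩
  obtain ⟨a, ha, b, hb, hab, hnab⟩ : ∃ a ∈ U, ∃ b ∈ U, a ≠ b ∧ ¬ G.Adj a b := by
    simpa [IsClique, Set.Pairwise] using hU
  obtain ⟨x, hx, hxa, hax, hsx⟩ := step a ha b hb hab hnab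
  obtain ⟨y, hy, hyx, hxy, hsy⟩ := step x hx a ha hxa (fun h => hax h.symm)
  exact .inr ⟨x, hx, y, hy, hyx.symm, hxy, hsx, hsy⟩

theorem Chordal.exists_isSimplicialIn (hG : G.Chordal) {U : Finset V} (hU : U.Nonempty) :
    ∃ v ∈ U, G.IsSimplicialIn U v := by
  rcases hG.isClique_or_exists_isSimplicialIn U with hcl | ⟨x, hx, -, -, -, -, hsx, -⟩
  · obtain ⟨v, hv⟩ := hU
    exact ⟨v, hv, hcl.subset Set.inter_subset_right⟩
  · exact ⟨x, hx, hsx⟩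

end

end SimpleGraph

namespace Matrix

variable {ι : Type*}

lemma exists_support_subset_restrict_eq {K : Finset ι} (w : K → ℝ) :
    ∃ z : ι → ℝ, Function.support z ⊆ K ∧ (fun k : K => z k) = w := by
  classical
  refine ⟨fun i => if h : i ∈ K then w ⟨i, h⟩ else 0, fun i hi => ?_, by simp⟩
  by_contra h
  exact hi (dif_neg h)

variable [Fintype ι]

def PosSemidefOn (X : Matrix ι ι ℝ) (K : Set ι) : Prop :=
  ∀ z : ι → ℝ, Function.support z ⊆ K → 0 ≤ z ⬝ᵥ X *ᵥ z

lemma PosSemidefOn.mono {X : Matrix ι ι ℝ} {K L : Set ι} (h : X.PosSemidefOn L) (hKL : K ⊆ L) :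
    X.PosSemidefOn K :=
  fun z hz => h z (hz.trans hKL)

theorem IsSymm.exists_mulVec_eq [DecidableEq ι] {A : Matrix ι ι ℝ} (hA : A.IsSymm) {b : ι → ℝ}
    (hb : ∀ z, A *ᵥ z = 0 → b ⬝ᵥ z = 0) : ∃ u, A *ᵥ u = b := by
  have hsym : A.toEuclideanLin.IsSymmetric := isSymmetric_toEuclideanLin_iff.mpr <| by
    rwa [IsHermitian, conjTranspose_eq_transpose_of_trivial]
  have hb' : WithLp.toLp 2 b ∈ LinearMap.range A.toEuclideanLin := by
    rw [← Submodule.orthogonal_orthogonal (LinearMap.range _), hsym.orthogonal_range,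
      Submodule.mem_orthogonal]
    intro z hz
    simpa [EuclideanSpace.inner_eq_star_dotProduct, dotProduct_comm] using
      hb z.ofLp (by simpa using congrArg WithLp.ofLp hz)
  obtain ⟨u, hu⟩ := hb'
  exact ⟨u.ofLp, by simpa using congrArg WithLp.ofLp hu⟩

section

variable {K : Finset ι}

lemma dotProduct_eq_of_support_subset (y : ι → ℝ) {z : ι → ℝ} (hz : Function.support z ⊆ K) :
    y ⬝ᵥ z = (fun k : K => y k) ⬝ᵥ (fun k : K => z k) := by
  refine (Fintype.sum_of_injective _ Subtype.val_injective _ _ (fun i hi => ?_) fun _ => rfl).symm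
  rw [Function.notMem_support.mp fun h => hi ⟨⟨i, hz h⟩, rfl⟩, mul_zero]

lemma mulVec_apply_eq_of_support_subset (X : Matrix ι ι ℝ) {z : ι → ℝ}
    (hz : Function.support z ⊆ K) (k : K) :
    (X *ᵥ z) k = (X.submatrix ((↑) : K → ι) (↑) *ᵥ fun k : K => z k) k :=
  dotProduct_eq_of_support_subset _ hz

lemma dotProduct_mulVec_eq_of_support_subset (X : Matrix ι ι ℝ) {z : ι → ℝ}
    (hz : Function.support z ⊆ K) :
    z ⬝ᵥ X *ᵥ z = (fun k : K => z k) ⬝ᵥ X.submatrix ((↑) : K → ι) (↑) *ᵥ fun k : K => z k := by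
  rw [dotProduct_comm, dotProduct_eq_of_support_subset _ hz, dotProduct_comm]
  congr 1
  funext k
  exact mulVec_apply_eq_of_support_subset X hz k

lemma posSemidefOn_of_posSemidef_submatrix {X : Matrix ι ι ℝ}
    (h : (X.submatrix ((↑) : K → ι) (↑)).PosSemidef) : X.PosSemidefOn K := fun z hz => by
  simpa [dotProduct_mulVec_eq_of_support_subset X hz] using h.dotProduct_mulVec_nonneg _

end

lemma IsSymm.dotProduct_mulVec_smul_single_add [DecidableEq ι] {X : Matrix ι ι ℝ} (hX : X.IsSymm)
    (v : ι) (t : ℝ) (z : ι → ℝ) :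
    (t • Pi.single v 1 + z) ⬝ᵥ X *ᵥ (t • Pi.single v 1 + z) =
      t ^ 2 * X v v + 2 * t * (X *ᵥ z) v + z ⬝ᵥ X *ᵥ z := by
  have hzv : z ⬝ᵥ X *ᵥ Pi.single v 1 = (X *ᵥ z) v := by
    rw [dotProduct_mulVec, ← mulVec_transpose, hX.eq, dotProduct_single, mul_one]
  simp only [mulVec_add, mulVec_smul, add_dotProduct, dotProduct_add, smul_dotProduct,
    dotProduct_smul, hzv, single_dotProduct, one_mul, smul_eq_mul]
  simp only [mulVec_single, MulOpposite.op_one, Pi.smul_apply, col_apply, one_smul]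
  ring

theorem IsSymm.exists_mulVec_eq_of_posSemidefOn [DecidableEq ι] {X : Matrix ι ι ℝ}
    (hX : X.IsSymm) {v : ι} {K : Finset ι} (hXK : X.PosSemidefOn (insert v (K : Set ι))) :
    ∃ u : ι → ℝ, Function.support u ⊆ K ∧ (∀ k ∈ K, (X *ᵥ u) k = X k v) ∧
      u ⬝ᵥ X *ᵥ u ≤ X v v := by
  have hquad : ∀ t z, Function.support z ⊆ K →
      0 ≤ t ^ 2 * X v v + 2 * t * (X *ᵥ z) v + z ⬝ᵥ X *ᵥ z := by
    intro t z hz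
    rw [← hX.dotProduct_mulVec_smul_single_add]
    refine hXK _ fun i hi => ?_
    by_cases hiv : i = v
    · exact .inl hiv
    · exact .inr (hz (by simpa [hiv] using hi))
  have hrow : ∀ z, Function.support z ⊆ K → (X *ᵥ z) v = (fun k : K => X v k) ⬝ᵥ fun k => z k :=
    fun z hz => dotProduct_eq_of_support_subset _ hz
  -- the row of `v` is orthogonal to the kernel of `X_K`, hence in its range
  have hker : ∀ w, X.submatrix ((↑) : K → ι) (↑) *ᵥ w = 0 → (fun k : K => X v k) ⬝ᵥ w = 0 := by
    intro w hw
    obtain ⟨z, hz, rfl⟩ := exists_support_subset_restrict_eq w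
    have h0 : z ⬝ᵥ X *ᵥ z = 0 := by
      rw [dotProduct_mulVec_eq_of_support_subset X hz, hw, dotProduct_zero]
    have hdisc := discrim_le_zero (a := X v v) (b := 2 * (X *ᵥ z) v) (c := 0) fun t => by
      simpa [h0, sq, mul_comm, mul_left_comm, mul_assoc] using hquad t z hz
    rw [discrim] at hdisc
    rw [← hrow z hz]
    nlinarith
  obtain ⟨w, hw⟩ := (hX.submatrix _).exists_mulVec_eq hker
  obtain ⟨u, hu, rfl⟩ := exists_support_subset_restrict_eq w
  have huu : u ⬝ᵥ X *ᵥ u = (X *ᵥ u) v := by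
    rw [dotProduct_mulVec_eq_of_support_subset X hu, hw, hrow u hu, dotProduct_comm]
  refine ⟨u, hu, fun k hk => ?_, ?_⟩
  · rw [mulVec_apply_eq_of_support_subset X hu ⟨k, hk⟩, hw, hX.apply v k]
  · have := hquad (-1) u hu
    linarith

theorem PosSemidef.exists_posSemidef_border [DecidableEq ι] {M X : Matrix ι ι ℝ}
    (hM : M.PosSemidef) (hX : X.IsSymm) {v : ι} {K : Finset ι} (hvK : v ∉ K)
    (hMX : ∀ i ∈ K, ∀ j ∈ K, M i j = X i j) (hXK : X.PosSemidefOn (insert v (K : Set ι))) :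
    ∃ Y : Matrix ι ι ℝ, Y.PosSemidef ∧ (∀ i j, i ≠ v → j ≠ v → Y i j = M i j) ∧
      Y v v = X v v ∧ ∀ k ∈ K, Y v k = X v k ∧ Y k v = X k v := by
  obtain ⟨u, hu, hXu, huXu⟩ := hX.exists_mulVec_eq_of_posSemidefOn hXK
  have hsub : M.submatrix ((↑) : K → ι) ((↑) : K → ι) = X.submatrix (↑) (↑) := by
    ext i j
    exact hMX _ i.2 _ j.2
  have hMu : ∀ k ∈ K, (M *ᵥ u) k = X k v := fun k hk => by
    rw [mulVec_apply_eq_of_support_subset M hu ⟨k, hk⟩, hsub,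
      ← mulVec_apply_eq_of_support_subset X hu ⟨k, hk⟩, hXu k hk]
  have huMu : u ⬝ᵥ M *ᵥ u = u ⬝ᵥ X *ᵥ u := by
    rw [dotProduct_mulVec_eq_of_support_subset M hu, hsub,
      ← dotProduct_mulVec_eq_of_support_subset X hu]
  have hMt : Mᵀ = M := by simpa [conjTranspose_eq_transpose_of_trivial] using hM.isHermitian.eq
  have hvec : u ᵥ* M = M *ᵥ u := by rw [← mulVec_transpose, hMt]
  have hkv : ∀ k ∈ K, k ≠ v := fun k hk h => hvK (h ▸ hk)
  set L := (1 : Matrix ι ι ℝ).updateCol v u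
  have hLML : Lᵀ * M * L = (M.updateRow v (M *ᵥ u)).updateCol v
      (Function.update (M *ᵥ u) v ((M *ᵥ u) ⬝ᵥ u)) := by
    rw [← updateRow_transpose, transpose_one, updateRow_mul, Matrix.one_mul, mul_updateCol,
      Matrix.mul_one, updateRow_mulVec, hvec]
  refine ⟨Lᵀ * M * L + diagonal (Pi.single v (X v v - u ⬝ᵥ M *ᵥ u)), ?_, ?_, ?_, ?_⟩
  · refine PosSemidef.add ?_ (PosSemidef.diagonal fun i => ?_)
    · simpa [conjTranspose_eq_transpose_of_trivial] using hM.conjTranspose_mul_mul_same L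
    · rcases eq_or_ne i v with rfl | hiv
      · simpa [huMu] using huXu
      · simp [hiv]
  · intro i j hiv hjv
    simp [hLML, hiv, hjv, diagonal_apply]
  · simp [hLML, dotProduct_comm u]
  · intro k hk
    simp [hLML, hkv k hk, (hkv k hk).symm, hMu k hk, hX.apply v k]

end Matrix

namespace SimpleGraph

variable {V : Type*} [Fintype V] [DecidableEq V] {G : SimpleGraph V}

open Finset

theorem Chordal.exists_posSemidef_completion (hG : G.Chordal) {X : Matrix V V ℝ} (hX : X.IsSymm)
    (hXG : ∀ K : Finset V, G.IsClique (K : Set V) → X.PosSemidefOn K) (U : Finset V) :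
    ∃ Y : Matrix V V ℝ, Y.PosSemidef ∧
      ∀ i ∈ U, ∀ j ∈ U, (i = j ∨ G.Adj i j) → Y i j = X i j := by
  classical
  induction U using Finset.strongInduction with
  | H U ih =>
  rcases U.eq_empty_or_nonempty with rfl | hU
  · exact ⟨0, .zero, by simp⟩
  obtain ⟨v, hvU, hv⟩ := hG.exists_isSimplicialIn hU
  obtain ⟨M, hM, hMX⟩ := ih (U.erase v) (erase_ssubset hvU)
  set K := (U.erase v).filter (G.Adj v)
  have hK : ∀ k ∈ K, k ∈ U.erase v ∧ G.Adj v k := fun k hk => mem_filter.mp hk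
  have hKcl : G.IsClique (K : Set V) :=
    IsClique.subset (fun k hk => show k ∈ G.neighborSet v ∩ U from
      ⟨(hK k hk).2, mem_of_mem_erase (hK k hk).1⟩) hv
  have hvKcl : G.IsClique (insert v K : Finset V) := by
    rw [coe_insert]
    exact hKcl.insert fun k hk _ => (hK k hk).2
  obtain ⟨Y, hY, hYM, hYvv, hYvK⟩ := hM.exists_posSemidef_border hX (v := v) (K := K)
    (fun h => (hK v h).2.ne rfl)
    (fun i hi j hj => hMX i (hK i hi).1 j (hK j hj).1 ((eq_or_ne i j).imp_right (hKcl hi hj)))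
    (by simpa using hXG _ hvKcl)
  refine ⟨Y, hY, fun i hi j hj hij => ?_⟩
  obtain rfl | hiv := eq_or_ne i v
  · obtain rfl | hjv := eq_or_ne j i
    · exact hYvv
    · exact (hYvK j (mem_filter.mpr ⟨mem_erase.mpr ⟨hjv, hj⟩, hij.resolve_left hjv.symm⟩)).1
  · obtain rfl | hjv := eq_or_ne j v
    · exact (hYvK i (mem_filter.mpr ⟨mem_erase.mpr ⟨hiv, hi⟩, (hij.resolve_left hiv).symm⟩)).2
    · rw [hYM i j hiv hjv]
      exact hMX i (mem_erase.mpr ⟨hiv, hi⟩) j (mem_erase.mpr ⟨hjv, hj⟩) hij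

end SimpleGraph

section

variable {n : ℕ}

lemma selMat_mul_mul_transpose_eq_submatrix (C : Finset (Fin n)) (X : Matrix (Fin n) (Fin n) ℝ) :
    selMat C * X * (selMat C)ᵀ = (X.submatrix ((↑) : C → Fin n) (↑)).submatrix
      (C.orderIsoOfFin rfl).toEquiv (C.orderIsoOfFin rfl).toEquiv := by
  ext h k
  simp only [Matrix.mul_apply, Matrix.transpose_apply, selMat, Matrix.of_apply, ite_mul, one_mul,
    zero_mul, mul_ite, mul_one, mul_zero, Finset.sum_ite_eq, Finset.mem_univ, if_true]
  rfl

lemma posSemidef_selMat_mul_mul_transpose_iff (C : Finset (Fin n))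
    (X : Matrix (Fin n) (Fin n) ℝ) :
    (selMat C * X * (selMat C)ᵀ).PosSemidef ↔ (X.submatrix ((↑) : C → Fin n) (↑)).PosSemidef := by
  rw [selMat_mul_mul_transpose_eq_submatrix]
  exact Matrix.posSemidef_submatrix_equiv _

lemma exists_isMaxClique_superset {G : SimpleGraph (Fin n)} {K : Finset (Fin n)}
    (hK : G.IsClique (K : Set (Fin n))) : ∃ m, IsMaxClique G m ∧ K ⊆ m := by
  obtain ⟨m, hKm, hm⟩ :=
    Finite.exists_le_maximal (p := fun s : Finset (Fin n) => G.IsClique (s : Set (Fin n))) hK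
  exact ⟨m, ⟨hm.1, fun t ht hmt => le_antisymm hmt (hm.2 ht hmt)⟩, hKm⟩

variable {G : SimpleGraph (Fin n)} [DecidableRel G.Adj]

lemma submatrix_sparsityProj_of_isClique {K : Finset (Fin n)} (hK : G.IsClique (K : Set (Fin n)))
    (Y : Matrix (Fin n) (Fin n) ℝ) :
    (sparsityProj G Y).submatrix ((↑) : K → Fin n) ((↑) : K → Fin n) = Y.submatrix (↑) (↑) := by
  ext i j
  have hij : (i : Fin n) = j ∨ G.Adj i j := (eq_or_ne (i : Fin n) j).imp_right (hK i.2 j.2)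
  simp only [Matrix.submatrix_apply, sparsityProj, Matrix.of_apply, if_pos hij]

lemma sparsityProj_eq_of_hasSparsity {X Y : Matrix (Fin n) (Fin n) ℝ} (hX : HasSparsity G X)
    (hYX : ∀ i j, (i = j ∨ G.Adj i j) → Y i j = X i j) : sparsityProj G Y = X := by
  ext i j
  by_cases hij : i = j ∨ G.Adj i j
  · simp [sparsityProj, hij, hYX i j hij]
  · rw [not_or] at hij
    simp [sparsityProj, hij, hX i j hij.1 hij.2]

end

/-- (Grone et al.) For a chordal graph `G`, a symmetric matrix `X` with sparsity
pattern `G` lies in the projection of the PSD cone onto `S^n(E)` iff all its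
principal submatrices indexed by the cliques of `G` are PSD. -/
theorem grone_chordal_decomposition {n : ℕ} (G : SimpleGraph (Fin n)) [DecidableRel G.Adj]
    (hG : IsChordal G)
    (X : Matrix (Fin n) (Fin n) ℝ) (hXsymm : X.IsSymm) (hXsp : HasSparsity G X) :
    (∃ Y : Matrix (Fin n) (Fin n) ℝ, Y.PosSemidef ∧ sparsityProj G Y = X) ↔
      ∀ s : Finset (Fin n), IsMaxClique G s →
        (selMat s * X * (selMat s)ᵀ).PosSemidef := by
  constructor
  · rintro ⟨Y, hY, rfl⟩ s hs
    rw [posSemidef_selMat_mul_mul_transpose_iff, submatrix_sparsityProj_of_isClique hs.1]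
    exact hY.submatrix _
  · intro h
    have hXG : ∀ K : Finset (Fin n), G.IsClique (K : Set (Fin n)) → X.PosSemidefOn K := by
      intro K hK
      obtain ⟨m, hm, hKm⟩ := exists_isMaxClique_superset hK
      exact (Matrix.posSemidefOn_of_posSemidef_submatrix
        ((posSemidef_selMat_mul_mul_transpose_iff m X).mp (h m hm))).mono (by simpa using hKm)
    obtain ⟨Y, hY, hYX⟩ :=
      SimpleGraph.Chordal.exists_posSemidef_completion hG hXsymm hXG Finset.univ
    exact ⟨Y, hY, sparsityProj_eq_of_hasSparsity hXsp fun i j =>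
      hYX i (Finset.mem_univ _) j (Finset.mem_univ _)⟩
end

section
/- Let G = (V,E) be an undirected simple graph on V = {1,…,n} and let C_1,…,C_N ⊆ V be such that for every pair (h,k) ∈ Ē there is some i with h ∈ C_i and k ∈ C_i. Then for every C ∈ S^n(E) there exist symmetric matrices C_i ∈ S^{|C_i|}, i = 1,…,N, such that ⟨C, Q⟩ = Σ_{i=1}^N ⟨C_i, Q_{C_i}⟩ for all Q ∈ S^n(E), where Q_{C_i} = P_{C_i} Q P_{C_i}ᵀ. -/
open Matrix

/-!
Assign every entry `C_{hk}` with `(h, k) ∈ Ē` to one index set `C_i` containing both `h` and `k`.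
This writes `C = ∑ W_i` with symmetric `W_i` supported on `C_i × C_i`. For such `W_i`,
`⟨W_i, Q⟩ = ⟨P W_i Pᵀ, P Q Pᵀ⟩` with `P = P_{C_i}`, since `Pᵀ P` is the coordinate projection
onto `C_i`; so `C_i := P W_i Pᵀ` works.
-/

namespace Matrix

variable {ι m n α : Type*}

theorem exists_isSymm_sum_eq_of_support_covered [Fintype ι] [AddCommMonoid α]
    (s : ι → Set n) (C : Matrix n n α) (hC : C.IsSymm)
    (hcover : ∀ h k, C h k ≠ 0 → ∃ i, h ∈ s i ∧ k ∈ s i) :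
    ∃ W : ι → Matrix n n α, (∀ i, (W i).IsSymm) ∧
      (∀ i h k, W i h k ≠ 0 → h ∈ s i ∧ k ∈ s i) ∧ ∑ i, W i = C := by
  classical
  -- Choosing per unordered pair `{h, k}` is what keeps `W i` symmetric.
  let pick : Sym2 n → Option ι := fun z =>
    if hz : ∃ i, ∀ x ∈ z, x ∈ s i then some hz.choose else none
  have pick_spec : ∀ z i, pick z = some i → ∀ x ∈ z, x ∈ s i := by
    intro z i hi
    by_cases hz : ∃ i, ∀ x ∈ z, x ∈ s i
    · simp only [pick, dif_pos hz, Option.some.injEq] at hi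
      exact hi ▸ hz.choose_spec
    · simp [pick, dif_neg hz] at hi
  refine ⟨fun i => of fun h k => if pick s(h, k) = some i then C h k else 0, ?_, ?_, ?_⟩
  · intro i
    ext h k
    simp only [transpose_apply, of_apply, Sym2.eq_swap, hC.apply h k]
  · intro i h k hW
    have hi : pick s(h, k) = some i := by
      by_contra hne
      simp [hne] at hW
    exact ⟨pick_spec _ i hi h (Sym2.mem_mk_left h k), pick_spec _ i hi k (Sym2.mem_mk_right h k)⟩
  · ext h k
    simp only [sum_apply, of_apply]
    cases hp : pick s(h, k) with
    | some j => simp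
    | none =>
      have hCz : C h k = 0 := by
        by_contra hne
        obtain ⟨i, hh, hk⟩ := hcover h k hne
        have hz : ∃ i, ∀ x ∈ s(h, k), x ∈ s i :=
          ⟨i, fun x hx => by rcases Sym2.mem_iff.mp hx with rfl | rfl <;> assumption⟩
        simp only [pick, dif_pos hz, reduceCtorEq] at hp
      simp [hCz]

theorem trace_submatrix_mul_submatrix_of_support [Fintype m] [Fintype n]
    [NonUnitalNonAssocSemiring α] {f : m → n} (hf : Function.Injective f) (W Q : Matrix n n α)
    (hW : ∀ h k, W h k ≠ 0 → h ∈ Set.range f ∧ k ∈ Set.range f) :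
    (W.submatrix f f * Q.submatrix f f).trace = (W * Q).trace := by
  have hW' : ∀ h k, h ∉ Set.range f ∨ k ∉ Set.range f → W h k = 0 := fun h k hhk =>
    by_contra fun hne => not_and_or.mpr hhk (hW h k hne)
  simp only [trace, diag_apply, mul_apply, submatrix_apply]
  refine Fintype.sum_of_injective f hf _ _ (fun h hh => ?_) (fun a => ?_)
  · exact Finset.sum_eq_zero fun k _ => by simp [hW' h k (Or.inl hh)]
  · exact Fintype.sum_of_injective f hf _ _ (fun k hk => by simp [hW' _ k (Or.inr hk)])
      fun b => rfl

end Matrix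

theorem selMat_eq_submatrix_one {n : ℕ} (C : Finset (Fin n)) :
    selMat C = (1 : Matrix (Fin n) (Fin n) ℝ).submatrix (C.orderEmbOfFin rfl) id := by
  ext h k
  simp only [selMat, of_apply, submatrix_apply, id, one_apply, Finset.coe_orderIsoOfFin_apply]
  congr

theorem selMat_mul_mul_transpose {n : ℕ} (C : Finset (Fin n)) (Q : Matrix (Fin n) (Fin n) ℝ) :
    selMat C * Q * (selMat C)ᵀ = Q.submatrix (C.orderEmbOfFin rfl) (C.orderEmbOfFin rfl) := by
  rw [selMat_eq_submatrix_one, transpose_submatrix, transpose_one,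
    ← Equiv.coe_refl, one_submatrix_mul, mul_submatrix_one]
  rfl

/-- If the index sets `C_1, …, C_N` cover every pair of `Ē`, then every
`C ∈ S^n(E)` admits a decomposition of its trace inner product with all
`Q ∈ S^n(E)` through the principal submatrices `Q_{C_i}`. -/
theorem cost_decomposition_exists {n N : ℕ} (G : SimpleGraph (Fin n))
    (Cs : Fin N → Finset (Fin n))
    (hcover : ∀ h k : Fin n, (h = k ∨ G.Adj h k) → ∃ i, h ∈ Cs i ∧ k ∈ Cs i)
    (C : Matrix (Fin n) (Fin n) ℝ) (hCsymm : C.IsSymm) (hCsp : HasSparsity G C) :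
    ∃ Ci : (i : Fin N) → Matrix (Fin (Cs i).card) (Fin (Cs i).card) ℝ,
      (∀ i, (Ci i).IsSymm) ∧
      ∀ Q : Matrix (Fin n) (Fin n) ℝ, Q.IsSymm → HasSparsity G Q →
        (C * Q).trace = ∑ i, (Ci i * (selMat (Cs i) * Q * (selMat (Cs i))ᵀ)).trace := by
  have hsupp : ∀ h k, C h k ≠ 0 → ∃ i, h ∈ (Cs i : Set (Fin n)) ∧ k ∈ (Cs i : Set (Fin n)) :=
    fun h k hne => hcover h k <| by
      by_contra! hpat
      exact hne (hCsp h k hpat.1 hpat.2)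
  obtain ⟨W, hWsymm, hWsupp, hWsum⟩ :=
    exists_isSymm_sum_eq_of_support_covered (fun i => (Cs i : Set (Fin n))) C hCsymm hsupp
  let e : (i : Fin N) → Fin (Cs i).card ↪o Fin n := fun i => (Cs i).orderEmbOfFin rfl
  refine ⟨fun i => (W i).submatrix (e i) (e i), fun i => (hWsymm i).submatrix _, ?_⟩
  intro Q _ _
  simp_rw [selMat_mul_mul_transpose]
  rw [← hWsum, Finset.sum_mul, trace_sum]
  refine Finset.sum_congr rfl fun i _ => ?_
  rw [trace_submatrix_mul_submatrix_of_support (e i).injective]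
  simpa [e, Finset.range_orderEmbOfFin] using hWsupp i
end

section
/- (Existence and uniqueness of the sparse matrix determined by consistent clique submatrices.) Let G = (V,E) be an undirected simple graph on V = {1,…,n} and let C_1,…,C_N ⊆ V be complete sets such that for every pair (h,k) ∈ Ē there is some i with h ∈ C_i and k ∈ C_i. Suppose X_i ∈ S^{|C_i|}, i = 1,…,N, satisfy the consistency constraints P_{C_i ∩ C_j}( P_{C_i}ᵀ X_i P_{C_i} − P_{C_j}ᵀ X_j P_{C_j} ) P_{C_i ∩ C_j}ᵀ = 0 for all i, j ∈ {1,…,N}. Then there exists a unique X ∈ S^n(E) such that P_{C_i} X P_{C_i}ᵀ = X_i for all i ∈ {1,…,N}. -/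
open Matrix

/-!
Lifting each `X_i` to the `n × n` matrix `P_{C_i}ᵀ X_i P_{C_i}` gives matrices that, by the
consistency constraints, agree on every overlap `(C_i ∩ C_j) × (C_i ∩ C_j)`, so they glue to a
single matrix `X` supported on the union of the blocks `C_i × C_i`. Since the `C_i` are complete
and cover `Ē`, that union is exactly the pattern `Ē`: this gives `X ∈ S^n(E)`, and any other
`Y ∈ S^n(E)` with the same principal submatrices agrees with `X` on every block and vanishes
off them.
-/

section Selection

variable {n : ℕ} (C : Finset (Fin n))

theorem selMat_apply (a : Fin C.card) (k : Fin n) :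
    selMat C a k = if C.orderEmbOfFin rfl a = k then 1 else 0 := by
  simp only [selMat, of_apply, Finset.coe_orderIsoOfFin_apply]
  rfl

theorem selMat_mul_apply {m : Type*} [Fintype m] (M : Matrix (Fin n) m ℝ)
    (a : Fin C.card) (k : m) : (selMat C * M) a k = M (C.orderEmbOfFin rfl a) k := by
  simp [mul_apply, selMat_apply, ite_mul]

theorem mul_transpose_selMat_apply {m : Type*} [Fintype m] (M : Matrix m (Fin n) ℝ)
    (h : m) (b : Fin C.card) : (M * (selMat C)ᵀ) h b = M h (C.orderEmbOfFin rfl b) := by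
  simp [mul_apply, selMat_apply, mul_ite]

theorem selMat_mul_mul_transpose_apply (M : Matrix (Fin n) (Fin n) ℝ) (a b : Fin C.card) :
    (selMat C * M * (selMat C)ᵀ) a b = M (C.orderEmbOfFin rfl a) (C.orderEmbOfFin rfl b) := by
  rw [mul_transpose_selMat_apply, selMat_mul_apply]

theorem selMat_mul_transpose_selMat : selMat C * (selMat C)ᵀ = 1 := by
  ext a b
  rw [mul_transpose_selMat_apply, selMat_apply, one_apply]
  simp [(C.orderEmbOfFin rfl).injective.eq_iff]

theorem selMat_mul_mul_transpose_eq_iff {M M' : Matrix (Fin n) (Fin n) ℝ} :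
    selMat C * M * (selMat C)ᵀ = selMat C * M' * (selMat C)ᵀ ↔
      ∀ h ∈ C, ∀ k ∈ C, M h k = M' h k := by
  have hrange : ∀ h, h ∈ C ↔ ∃ a, C.orderEmbOfFin rfl a = h := fun h => by
    rw [← Finset.mem_coe, ← Finset.range_orderEmbOfFin C rfl, Set.mem_range]
  constructor
  · intro hMM' h hh k hk
    obtain ⟨a, rfl⟩ := (hrange h).1 hh
    obtain ⟨b, rfl⟩ := (hrange k).1 hk
    simpa only [selMat_mul_mul_transpose_apply] using congr_fun₂ hMM' a b
  · intro hMM'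
    ext a b
    simp only [selMat_mul_mul_transpose_apply]
    exact hMM' _ (C.orderEmbOfFin_mem rfl a) _ (C.orderEmbOfFin_mem rfl b)

theorem selMat_mul_transpose_mul_mul_transpose (A : Matrix (Fin C.card) (Fin C.card) ℝ) :
    selMat C * ((selMat C)ᵀ * A * selMat C) * (selMat C)ᵀ = A := by
  simp only [← Matrix.mul_assoc, selMat_mul_transpose_selMat, Matrix.one_mul]
  rw [Matrix.mul_assoc, selMat_mul_transpose_selMat, Matrix.mul_one]

theorem isSymm_transpose_selMat_mul_mul {A : Matrix (Fin C.card) (Fin C.card) ℝ}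
    (hA : A.IsSymm) : ((selMat C)ᵀ * A * selMat C).IsSymm := by
  simp only [IsSymm, transpose_mul, transpose_transpose, hA.eq, Matrix.mul_assoc]

end Selection

section Gluing

variable {α ι : Type*} (Cs : ι → Finset α) (D : ι → Matrix α α ℝ)

def AgreeOnOverlaps : Prop :=
  ∀ i j h k, h ∈ Cs i → k ∈ Cs i → h ∈ Cs j → k ∈ Cs j → D i h k = D j h k

noncomputable def glueMat : Matrix α α ℝ :=
  open Classical in
  of fun h k => if hc : ∃ i, h ∈ Cs i ∧ k ∈ Cs i then D hc.choose h k else 0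

variable {Cs D}

theorem glueMat_apply_of_mem (hD : AgreeOnOverlaps Cs D) {i : ι} {h k : α}
    (hh : h ∈ Cs i) (hk : k ∈ Cs i) : glueMat Cs D h k = D i h k := by
  have hc : ∃ i, h ∈ Cs i ∧ k ∈ Cs i := ⟨i, hh, hk⟩
  simp only [glueMat, of_apply, dif_pos hc]
  exact hD _ i h k hc.choose_spec.1 hc.choose_spec.2 hh hk

theorem glueMat_apply_of_not_exists {h k : α} (hc : ¬ ∃ i, h ∈ Cs i ∧ k ∈ Cs i) :
    glueMat Cs D h k = 0 := by
  simp only [glueMat, of_apply, dif_neg hc]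

theorem isSymm_glueMat (hD : AgreeOnOverlaps Cs D) (hsymm : ∀ i, (D i).IsSymm) :
    (glueMat Cs D).IsSymm := by
  ext h k
  rw [transpose_apply]
  by_cases hc : ∃ i, k ∈ Cs i ∧ h ∈ Cs i
  · obtain ⟨i, hk, hh⟩ := hc
    rw [glueMat_apply_of_mem hD hk hh, glueMat_apply_of_mem hD hh hk, ← (hsymm i).apply k h]
  · rw [glueMat_apply_of_not_exists hc,
      glueMat_apply_of_not_exists fun ⟨i, hh, hk⟩ => hc ⟨i, hk, hh⟩]

end Gluing

section Sparsity

variable {n : ℕ} {ι : Type*} {G : SimpleGraph (Fin n)} {Cs : ι → Finset (Fin n)}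

theorem hasSparsity_glueMat (hcomplete : ∀ i, G.IsClique (↑(Cs i) : Set (Fin n)))
    (D : ι → Matrix (Fin n) (Fin n) ℝ) : HasSparsity G (glueMat Cs D) := by
  intro h k hne hadj
  exact glueMat_apply_of_not_exists fun ⟨i, hh, hk⟩ => hadj (hcomplete i hh hk hne)

theorem eq_of_hasSparsity_of_selMat_mul_mul_transpose_eq
    (hcover : ∀ h k : Fin n, (h = k ∨ G.Adj h k) → ∃ i, h ∈ Cs i ∧ k ∈ Cs i)
    {X Y : Matrix (Fin n) (Fin n) ℝ} (hX : HasSparsity G X) (hY : HasSparsity G Y)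
    (hXY : ∀ i, selMat (Cs i) * X * (selMat (Cs i))ᵀ = selMat (Cs i) * Y * (selMat (Cs i))ᵀ) :
    X = Y := by
  ext h k
  by_cases hc : ∃ i, h ∈ Cs i ∧ k ∈ Cs i
  · obtain ⟨i, hh, hk⟩ := hc
    exact (selMat_mul_mul_transpose_eq_iff _).1 (hXY i) h hh k hk
  · have hne : h ≠ k := by
      rintro rfl
      exact hc (hcover h h (Or.inl rfl))
    have hadj : ¬ G.Adj h k := fun hadj => hc (hcover h k (Or.inr hadj))
    rw [hX h k hne hadj, hY h k hne hadj]

end Sparsity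

/-- (Existence and uniqueness of the sparse matrix determined by consistent
clique submatrices.) If the complete sets `C_1, …, C_N` cover every pair of `Ē`
and the symmetric matrices `X_i` satisfy the consistency constraints on all
overlaps, then there is a unique `X ∈ S^n(E)` whose principal submatrix indexed
by `C_i` is `X_i`, for every `i`. -/
theorem sparse_matrix_from_consistent_submatrices {n N : ℕ}
    (G : SimpleGraph (Fin n)) (Cs : Fin N → Finset (Fin n))
    (hcomplete : ∀ i, G.IsClique (↑(Cs i) : Set (Fin n)))
    (hcover : ∀ h k : Fin n, (h = k ∨ G.Adj h k) → ∃ i, h ∈ Cs i ∧ k ∈ Cs i)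
    (Xi : (i : Fin N) → Matrix (Fin (Cs i).card) (Fin (Cs i).card) ℝ)
    (hXisymm : ∀ i, (Xi i).IsSymm)
    (hconsistent : ∀ i j : Fin N,
      selMat (Cs i ∩ Cs j) *
        ((selMat (Cs i))ᵀ * Xi i * selMat (Cs i) -
          (selMat (Cs j))ᵀ * Xi j * selMat (Cs j)) *
        (selMat (Cs i ∩ Cs j))ᵀ = 0) :
    ∃! X : Matrix (Fin n) (Fin n) ℝ,
      (X.IsSymm ∧ HasSparsity G X) ∧
      ∀ i, selMat (Cs i) * X * (selMat (Cs i))ᵀ = Xi i := by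
  set D : Fin N → Matrix (Fin n) (Fin n) ℝ := fun i => (selMat (Cs i))ᵀ * Xi i * selMat (Cs i)
  have hD : AgreeOnOverlaps Cs D := by
    intro i j h k hhi hki hhj hkj
    have hij := hconsistent i j
    rw [Matrix.mul_sub, Matrix.sub_mul, sub_eq_zero, selMat_mul_mul_transpose_eq_iff] at hij
    exact hij h (Finset.mem_inter.2 ⟨hhi, hhj⟩) k (Finset.mem_inter.2 ⟨hki, hkj⟩)
  have hsub : ∀ i, selMat (Cs i) * glueMat Cs D * (selMat (Cs i))ᵀ = Xi i := fun i => by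
    conv_rhs => rw [← selMat_mul_transpose_mul_mul_transpose (Cs i) (Xi i)]
    exact (selMat_mul_mul_transpose_eq_iff _).2 fun h hh k hk => glueMat_apply_of_mem hD hh hk
  have hsymm : (glueMat Cs D).IsSymm :=
    isSymm_glueMat hD fun i => isSymm_transpose_selMat_mul_mul _ (hXisymm i)
  refine ⟨glueMat Cs D, ⟨⟨hsymm, hasSparsity_glueMat hcomplete D⟩, hsub⟩, ?_⟩
  rintro Y ⟨⟨-, hY⟩, hYsub⟩
  refine eq_of_hasSparsity_of_selMat_mul_mul_transpose_eq hcover hY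
    (hasSparsity_glueMat hcomplete D) fun i => ?_
  rw [hYsub, hsub]
end
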